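/- arXiv:2605.02042 — 2 statements merged into one kernel-verified Lean document; each statement's English description precedes it below -/
import Mathlib

section
/- Let H be a separable infinite-dimensional complex Hilbert space and let {f_n}_{n=0}^∞ be a sequence in H. Then {f_n} is an SCO sequence (there exists a surjective bounded linear operator B on H such that {B f_n} is an orthonormal basis of H) if and only if there exists an infinite-dimensional closed subspace D ⊆ H such that {P_D f_n}_{n=0}^∞ is a Riesz basis of D, where P_D is the orthogonal projection of H onto D; here a Riesz basis of D means the image of an orthonormal basis of D under a bounded invertible operator on D. -/
/-!
If `B` is surjective and maps `fₙ` onto an orthonormal basis, take `D = (ker B)ᗮ`: since `B`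
vanishes on `Dᗮ = ker B`, `B fₙ = B (P_D fₙ)`, and `B` restricts to an isomorphism `S : D ≃ H`, so `P_D fₙ`
is the image under `S⁻¹` of an orthonormal basis of `H`, which an isometry `D ≃ H` pulls back
to an orthonormal basis of `D`. Conversely, if `P_D fₙ = T eₙ`, then `W ∘ T⁻¹ ∘ P_D` is
surjective and sends `fₙ` to an orthonormal basis of `H`, for `W : D ≃ H` an isometry matching
`eₙ` with an orthonormal basis of `H`. Both isometries exist because separable
infinite-dimensional Hilbert spaces have Hilbert bases indexed by `ℕ`.
-/

open TopologicalSpace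

def IsRieszBasis (𝕜 : Type*) {D ι : Type*} [RCLike 𝕜] [NormedAddCommGroup D]
    [InnerProductSpace 𝕜 D] (u : ι → D) : Prop :=
  ∃ (e : HilbertBasis ι 𝕜 D) (T : D ≃L[𝕜] D), ∀ i, u i = T (e i)

section

variable {𝕜 E F ι : Type*} [RCLike 𝕜] [NormedAddCommGroup E] [InnerProductSpace 𝕜 E]
  [NormedAddCommGroup F] [InnerProductSpace 𝕜 F]

theorem Orthonormal.norm_sub_sq_eq_two {v : ι → E} (hv : Orthonormal 𝕜 v) {i j : ι}
    (hij : i ≠ j) : ‖v i - v j‖ ^ 2 = 2 := by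
  rw [@norm_sub_sq 𝕜, hv.inner_eq_zero hij, hv.1 i, hv.1 j]
  norm_num

/-- Distinct vectors of an orthonormal family are `√2` apart, so the balls of radius `1/2`
around them are disjoint open sets. -/
theorem Orthonormal.countable [SeparableSpace E] {v : ι → E} (hv : Orthonormal 𝕜 v) :
    Countable ι := by
  refine Pairwise.countable_of_isOpen_disjoint (s := fun i => Metric.ball (v i) (1 / 2))
    (fun i j hij => Metric.ball_disjoint_ball ?_) (fun _ => Metric.isOpen_ball)
    (fun i => ⟨v i, Metric.mem_ball_self (by norm_num)⟩)
  have h := hv.norm_sub_sq_eq_two hij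
  rw [dist_eq_norm]
  nlinarith [norm_nonneg (v i - v j)]

theorem HilbertBasis.finiteDimensional [Finite ι] (b : HilbertBasis ι 𝕜 E) :
    FiniteDimensional 𝕜 E := by
  have := Fintype.ofFinite ι
  exact .of_basis b.toOrthonormalBasis.toBasis

theorem HilbertBasis.not_finiteDimensional [Infinite ι] (b : HilbertBasis ι 𝕜 E) :
    ¬ FiniteDimensional 𝕜 E := fun _ =>
  Module.Finite.not_linearIndependent_of_infinite _ b.orthonormal.linearIndependent

theorem exists_hilbertBasis_nat [CompleteSpace E] [SeparableSpace E]
    (hE : ¬ FiniteDimensional 𝕜 E) : Nonempty (HilbertBasis ℕ 𝕜 E) := by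
  obtain ⟨w, b, -⟩ := exists_hilbertBasis 𝕜 E
  have := b.orthonormal.countable
  have : Infinite w := not_finite_iff_infinite.mp fun _ => hE b.finiteDimensional
  obtain ⟨g⟩ : Nonempty (ℕ ≃ w) := nonempty_equiv_of_countable
  refine ⟨HilbertBasis.mk (b.orthonormal.comp g g.injective) ?_⟩
  rw [Set.range_comp, g.surjective.range_eq, Set.image_univ, b.dense_span]

protected noncomputable def HilbertBasis.equiv (b : HilbertBasis ι 𝕜 E)
    (b' : HilbertBasis ι 𝕜 F) : E ≃ₗᵢ[𝕜] F :=
  b.repr.trans b'.repr.symm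

@[simp]
theorem HilbertBasis.equiv_apply_basis (b : HilbertBasis ι 𝕜 E) (b' : HilbertBasis ι 𝕜 F)
    (i : ι) : b.equiv b' (b i) = b' i := by
  classical
  simp [HilbertBasis.equiv, b.repr_self, b'.repr_symm_single]

section Surjective

variable [CompleteSpace E] (B : E →L[𝕜] F)

theorem ContinuousLinearMap.apply_orthogonalProjectionOnto_ker_orthogonal (v : E) :
    B (B.kerᗮ.orthogonalProjectionOnto v) = B v := by
  have hmem : v - B.kerᗮ.orthogonalProjectionOnto v ∈ B.ker := by simp
  rwa [LinearMap.mem_ker, map_sub, sub_eq_zero, eq_comm] at hmem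

noncomputable def ContinuousLinearMap.kerOrthogonalEquivOfSurjective [CompleteSpace F]
    (hB : Function.Surjective B) : B.kerᗮ ≃L[𝕜] F :=
  .ofBijective (B.comp B.kerᗮ.subtypeL)
    (by
      rw [Submodule.eq_bot_iff]
      rintro ⟨x, hx⟩ hBx
      simpa using B.ker.orthogonal_disjoint.le_bot ⟨hBx, hx⟩)
    (by
      rw [Submodule.eq_top_iff']
      intro y
      obtain ⟨x, rfl⟩ := hB y
      exact ⟨_, B.apply_orthogonalProjectionOnto_ker_orthogonal x⟩)

theorem ContinuousLinearMap.not_finiteDimensional_ker_orthogonal [CompleteSpace F]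
    (hB : Function.Surjective B) (hF : ¬ FiniteDimensional 𝕜 F) :
    ¬ FiniteDimensional 𝕜 B.kerᗮ := fun _ =>
  hF (.equiv (B.kerOrthogonalEquivOfSurjective hB).toLinearEquiv)

theorem ContinuousLinearMap.isRieszBasis_orthogonalProjectionOnto_ker_orthogonal
    [SeparableSpace E] [CompleteSpace F] (hB : Function.Surjective B)
    (ε : HilbertBasis ℕ 𝕜 F) (f : ℕ → E) (hf : ∀ n, B (f n) = ε n) :
    IsRieszBasis 𝕜 fun n => B.kerᗮ.orthogonalProjectionOnto (f n) := by
  let S := B.kerOrthogonalEquivOfSurjective hB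
  obtain ⟨e⟩ := exists_hilbertBasis_nat
    (B.not_finiteDimensional_ker_orthogonal hB ε.not_finiteDimensional)
  refine ⟨e, (e.equiv ε).toContinuousLinearEquiv.trans S.symm, fun n => ?_⟩
  rw [ContinuousLinearEquiv.trans_apply, LinearIsometryEquiv.coe_toContinuousLinearEquiv,
    HilbertBasis.equiv_apply_basis, S.eq_symm_apply, ← hf]
  exact B.apply_orthogonalProjectionOnto_ker_orthogonal (f n)

end Surjective

theorem exists_surjective_apply_eq_of_isRieszBasis_orthogonalProjectionOnto
    {D : Submodule 𝕜 E} [D.HasOrthogonalProjection] {f : ι → E}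
    (hf : IsRieszBasis 𝕜 fun i => D.orthogonalProjectionOnto (f i)) (ε : HilbertBasis ι 𝕜 F) :
    ∃ B : E →L[𝕜] F, Function.Surjective B ∧ ∀ i, B (f i) = ε i := by
  obtain ⟨e, T, hT⟩ := hf
  let W := (e.equiv ε).toContinuousLinearEquiv
  refine ⟨(W : D →L[𝕜] F) ∘L (T.symm : D →L[𝕜] D) ∘L D.orthogonalProjectionOnto, ?_, fun i => ?_⟩
  · exact W.surjective.comp <|
      T.symm.surjective.comp fun x => ⟨x, D.orthogonalProjectionOnto_mem_subspace_eq_self x⟩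
  · simp [W, hT]

end

theorem stmt9_general {H : Type*} [NormedAddCommGroup H] [InnerProductSpace ℂ H]
    [CompleteSpace H] [TopologicalSpace.SeparableSpace H]
    (fseq : ℕ → H) :
    (∃ B : H →L[ℂ] H, Function.Surjective B ∧
        Orthonormal ℂ (fun n => B (fseq n)) ∧
        (Submodule.span ℂ (Set.range fun n => B (fseq n))).topologicalClosure = ⊤) ↔
      ∃ (D : Submodule ℂ H) (hD : IsClosed (D : Set H)), ¬ FiniteDimensional ℂ D ∧
        (letI : CompleteSpace D := hD.completeSpace_coe
         ∃ (e : HilbertBasis ℕ ℂ D) (T : D ≃L[ℂ] D),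
            ∀ n : ℕ, (D.orthogonalProjection (fseq n) : D) = T (e n)) := by
  constructor
  · rintro ⟨B, hB, hon, hdense⟩
    let ε := HilbertBasis.mk hon hdense.ge
    exact ⟨B.kerᗮ, B.ker.isClosed_orthogonal,
      B.not_finiteDimensional_ker_orthogonal hB ε.not_finiteDimensional,
      B.isRieszBasis_orthogonalProjectionOnto_ker_orthogonal hB ε fseq
        fun n => by simp [ε]⟩
  · rintro ⟨D, hD, hDinf, hP⟩
    have : CompleteSpace D := hD.completeSpace_coe
    obtain ⟨ε⟩ := exists_hilbertBasis_nat (𝕜 := ℂ) (E := H) fun _ => hDinf inferInstance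
    obtain ⟨B, hB, hBε⟩ :=
      exists_surjective_apply_eq_of_isRieszBasis_orthogonalProjectionOnto hP ε
    have hBf : (fun n => B (fseq n)) = ε := funext hBε
    exact ⟨B, hB, hBf ▸ ε.orthonormal, hBf ▸ ε.dense_span⟩

/-- `{f_n}` is an SCO sequence (some surjective bounded operator maps it to an
orthonormal basis of `H`) iff there exists an infinite-dimensional closed subspace `D ⊆ H`
such that `{P_D f_n}` is a Riesz basis of `D`, i.e. the image of an orthonormal basis of `D`
under a bounded invertible operator on `D`. -/
theorem stmt9 {H : Type*} [NormedAddCommGroup H] [InnerProductSpace ℂ H]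
    [CompleteSpace H] [TopologicalSpace.SeparableSpace H]
    (hH : ¬ FiniteDimensional ℂ H) (fseq : ℕ → H) :
    (∃ B : H →L[ℂ] H, Function.Surjective B ∧
        Orthonormal ℂ (fun n => B (fseq n)) ∧
        (Submodule.span ℂ (Set.range fun n => B (fseq n))).topologicalClosure = ⊤) ↔
      ∃ (D : Submodule ℂ H) (hD : IsClosed (D : Set H)), ¬ FiniteDimensional ℂ D ∧
        (letI : CompleteSpace D := hD.completeSpace_coe
         ∃ (e : HilbertBasis ℕ ℂ D) (T : D ≃L[ℂ] D),
            ∀ n : ℕ, (D.orthogonalProjection (fseq n) : D) = T (e n)) :=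
  stmt9_general fseq
end

section
/- Let H be a separable infinite-dimensional complex Hilbert space, let {f_n}_{n=0}^∞ and {g_n}_{n=0}^∞ be sequences in H, and let B be a nonzero bounded linear operator on H such that {B f_n} is a Parseval frame for H. Suppose {f_n − g_n}_{n=0}^∞ is a Bessel sequence with bound 𝓑 < 1/‖B‖², i.e., ∑_{n=0}^∞ |⟨f, f_n − g_n⟩|² ≤ 𝓑‖f‖² for all f ∈ H. Then {g_n} is a CFC sequence (there exists a bounded linear operator C on H such that {C g_n} is a Parseval frame for H). Moreover, if {B f_n} is an orthonormal basis of H, then {g_n} is a CO sequence (there exists a bounded linear operator C on H such that {C g_n} is an orthonormal basis of H). -/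
/-!
Put `e n = B (fseq n)` and `k n = B (gseq n)`. Passing through `B†`, `e` is a Parseval frame and
`e - k` is a Bessel sequence with bound `r = 𝓑 ‖B‖² < 1`. For the analysis operators
`V_h y = (⟪h i, y⟫)ᵢ ∈ ℓ²`, `V_e` is an isometry and `‖V_{e-k}‖ ≤ √r`, so `V_k = V_e - V_{e-k}` is
bounded below by `1 - √r`. Then `S = V_k† V_k` is invertible and positive, and with
`T = S^(-1/2)` the operator `V_k T` is an isometry: `{T k n}` is a Parseval frame.
If `e` is an orthonormal basis, `V_e` is its coordinate map, so `W = V_e⁻¹ V_k` satisfies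
`‖1 - W‖ ≤ √r < 1`; thus `W†` is invertible, it sends `e n` to `k n`, and `(W†)⁻¹` sends `k n`
back to the basis vector `e n`.
-/

open scoped ComplexInnerProductSpace InnerProduct lp

lemma lp.hasSum_norm_sq {ι : Type*} {E : ι → Type*} [∀ i, NormedAddCommGroup (E i)]
    (f : lp E 2) : HasSum (fun i => ‖f i‖ ^ 2) (‖f‖ ^ 2) := by
  simpa using lp.hasSum_norm (by norm_num) f

section Frames

variable {ι H H' : Type*} [NormedAddCommGroup H] [InnerProductSpace ℂ H]
  [NormedAddCommGroup H'] [InnerProductSpace ℂ H']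

def IsParsevalFrame (h : ι → H) : Prop :=
  ∀ f : H, HasSum (fun i => ‖⟪f, h i⟫‖ ^ 2) (‖f‖ ^ 2)

def IsBesselSeq (h : ι → H) (M : ℝ) : Prop :=
  ∀ f : H, Summable (fun i => ‖⟪f, h i⟫‖ ^ 2) ∧ ∑' i, ‖⟪f, h i⟫‖ ^ 2 ≤ M * ‖f‖ ^ 2

lemma IsParsevalFrame.isBesselSeq {h : ι → H} (hh : IsParsevalFrame h) : IsBesselSeq h 1 :=
  fun f => ⟨(hh f).summable, by rw [(hh f).tsum_eq, one_mul]⟩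

lemma HilbertBasis.isParsevalFrame (b : HilbertBasis ι ℂ H) :
    IsParsevalFrame b := fun f => by
  simpa [b.repr_apply_apply, norm_inner_symm] using lp.hasSum_norm_sq (b.repr f)

namespace IsBesselSeq

variable {h : ι → H} {M : ℝ}

lemma mono (hh : IsBesselSeq h M) {M' : ℝ} (hMM' : M ≤ M') : IsBesselSeq h M' := fun f =>
  ⟨(hh f).1, (hh f).2.trans (by gcongr)⟩

lemma clm_comp [CompleteSpace H] [CompleteSpace H'] (hh : IsBesselSeq h M) (hM : 0 ≤ M)
    (B : H →L[ℂ] H') : IsBesselSeq (B ∘ h) (M * ‖B‖ ^ 2) := fun f => by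
  have hB (i : ι) : ⟪f, B (h i)⟫ = ⟪(B†) f, h i⟫ := (B.adjoint_inner_left (h i) f).symm
  have hBf : ‖(B†) f‖ ≤ ‖B‖ * ‖f‖ := by
    simpa only [LinearIsometryEquiv.norm_map] using (B†).le_opNorm f
  simp only [Function.comp_apply, hB]
  refine ⟨(hh ((B†) f)).1, (hh ((B†) f)).2.trans ?_⟩
  rw [mul_assoc, ← mul_pow]
  gcongr

lemma memℓp (hh : IsBesselSeq h M) (y : H) : Memℓp (fun i => ⟪h i, y⟫) 2 :=
  memℓp_gen <| by simpa [norm_inner_symm] using (hh y).1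

noncomputable def analysisOp (hh : IsBesselSeq h M) : H →L[ℂ] ℓ²(ι, ℂ) :=
  LinearMap.mkContinuous
    { toFun := fun y => ⟨fun i => ⟪h i, y⟫, hh.memℓp y⟩
      map_add' := fun x y => lp.ext <| funext fun i => inner_add_right _ _ _
      map_smul' := fun c x => lp.ext <| funext fun i => inner_smul_right _ _ _ }
    √M fun y => by
      refine lp.norm_le_of_tsum_le (by norm_num) (by positivity) ?_
      calc ∑' i, ‖⟪h i, y⟫‖ ^ (2 : ENNReal).toReal = ∑' i, ‖⟪y, h i⟫‖ ^ 2 := by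
            simp [norm_inner_symm]
        _ ≤ M * ‖y‖ ^ 2 := (hh y).2
        _ ≤ (√M * ‖y‖) ^ (2 : ENNReal).toReal := by
            norm_num [mul_pow, Real.sq_sqrt']
            gcongr
            exact le_max_left M 0

@[simp]
lemma analysisOp_apply_apply (hh : IsBesselSeq h M) (y : H) (i : ι) :
    hh.analysisOp y i = ⟪h i, y⟫ :=
  rfl

lemma hasSum_sq_norm_analysisOp (hh : IsBesselSeq h M) (y : H) :
    HasSum (fun i => ‖⟪y, h i⟫‖ ^ 2) (‖hh.analysisOp y‖ ^ 2) := by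
  simpa [norm_inner_symm] using lp.hasSum_norm_sq (hh.analysisOp y)

lemma norm_analysisOp_apply_le (hh : IsBesselSeq h M) (y : H) :
    ‖hh.analysisOp y‖ ≤ √M * ‖y‖ :=
  hh.analysisOp.le_of_opNorm_le (LinearMap.mkContinuous_norm_le _ (Real.sqrt_nonneg M) _) y

variable {g : ι → H} {M₁ M₂ M₃ : ℝ}

lemma analysisOp_sub_apply (hh : IsBesselSeq h M₁) (hg : IsBesselSeq g M₂)
    (hhg : IsBesselSeq (h - g) M₃) (y : H) :
    hhg.analysisOp y = hh.analysisOp y - hg.analysisOp y :=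
  lp.ext <| funext fun _ => inner_sub_left _ _ _

lemma sub (hh : IsBesselSeq h M₁) (hg : IsBesselSeq g M₂) :
    IsBesselSeq (h - g) ((√M₁ + √M₂) ^ 2) := fun y => by
  have hsum : HasSum (fun i => ‖⟪y, (h - g) i⟫‖ ^ 2)
      (‖hh.analysisOp y - hg.analysisOp y‖ ^ 2) := by
    convert lp.hasSum_norm_sq (hh.analysisOp y - hg.analysisOp y) using 3 with i
    rw [norm_inner_symm, Pi.sub_apply, inner_sub_left]
    rfl
  refine ⟨hsum.summable, hsum.tsum_eq ▸ ?_⟩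
  calc ‖hh.analysisOp y - hg.analysisOp y‖ ^ 2
      ≤ (‖hh.analysisOp y‖ + ‖hg.analysisOp y‖) ^ 2 := by gcongr; exact norm_sub_le _ _
    _ ≤ (√M₁ * ‖y‖ + √M₂ * ‖y‖) ^ 2 := by
        gcongr <;> apply norm_analysisOp_apply_le
    _ = (√M₁ + √M₂) ^ 2 * ‖y‖ ^ 2 := by ring

lemma of_sub (hh : IsBesselSeq h M₁) (hhg : IsBesselSeq (h - g) M₂) :
    IsBesselSeq g ((√M₁ + √M₂) ^ 2) := by
  simpa using hh.sub hhg

end IsBesselSeq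

lemma IsParsevalFrame.norm_analysisOp_apply {h : ι → H} (hh : IsParsevalFrame h) (y : H) :
    ‖hh.isBesselSeq.analysisOp y‖ = ‖y‖ :=
  (sq_eq_sq₀ (norm_nonneg _) (norm_nonneg _)).1
    ((hh.isBesselSeq.hasSum_sq_norm_analysisOp y).unique (hh y))

lemma IsParsevalFrame.mul_norm_le_norm_analysisOp_apply {e k : ι → H} {M M' : ℝ}
    (he : IsParsevalFrame e) (hek : IsBesselSeq (e - k) M) (hk : IsBesselSeq k M') (y : H) :
    (1 - √M) * ‖y‖ ≤ ‖hk.analysisOp y‖ := by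
  have hV : hk.analysisOp y = he.isBesselSeq.analysisOp y - hek.analysisOp y := by
    rw [he.isBesselSeq.analysisOp_sub_apply hk hek, sub_sub_cancel]
  calc (1 - √M) * ‖y‖ = ‖he.isBesselSeq.analysisOp y‖ - √M * ‖y‖ := by
        rw [he.norm_analysisOp_apply]; ring
    _ ≤ ‖he.isBesselSeq.analysisOp y‖ - ‖hek.analysisOp y‖ := by
        gcongr; exact hek.norm_analysisOp_apply_le y
    _ ≤ ‖hk.analysisOp y‖ := hV ▸ norm_sub_norm_le _ _

section Perturbation

open ContinuousLinearMap

variable {E F : Type*} [NormedAddCommGroup E] [InnerProductSpace ℂ E] [CompleteSpace E]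
  [NormedAddCommGroup F] [InnerProductSpace ℂ F] [CompleteSpace F]

theorem ContinuousLinearMap.exists_isSelfAdjoint_forall_norm_comp_eq (V : E →L[ℂ] F) {c : ℝ}
    (hc : 0 < c) (hV : ∀ y, c * ‖y‖ ≤ ‖V y‖) :
    ∃ T : E →L[ℂ] E, IsSelfAdjoint T ∧ ∀ y, ‖V (T y)‖ = ‖y‖ := by
  set S := V† ∘L V
  have hS_inner (y : E) : ⟪S y, y⟫ = ((‖V y‖ ^ 2 : ℝ) : ℂ) := by
    rw [comp_apply, adjoint_inner_left, inner_self_eq_norm_sq_to_K]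
    norm_cast
  have hS_unit : IsUnit S := by
    refine isUnit_of_forall_le_norm_inner_map S (c := (c ^ 2).toNNReal)
      (Real.toNNReal_pos.2 (by positivity)) fun y => ?_
    rw [hS_inner, Complex.norm_real, Real.norm_eq_abs, abs_of_nonneg (by positivity),
      Real.coe_toNNReal _ (sq_nonneg c)]
    nlinarith [hV y, norm_nonneg y, mul_nonneg hc.le (norm_nonneg y)]
  have hS : IsStrictlyPositive S :=
    ⟨(nonneg_iff_isPositive S).2 (isPositive_adjoint_comp_self V), hS_unit⟩
  set T := S ^ (-(1 / 2) : ℝ)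
  have hTST : T * S * T = 1 := by
    calc T * S * T = S ^ (-(1 / 2) : ℝ) * S ^ (1 : ℝ) * T := by rw [CFC.rpow_one S]
      _ = S ^ (1 / 2 : ℝ) * S ^ (-(1 / 2) : ℝ) := by
        rw [← CFC.rpow_add hS_unit]; norm_num [T]
      _ = 1 := CFC.rpow_mul_rpow_neg _
  have hT : IsSelfAdjoint T := (CFC.rpow_nonneg).isSelfAdjoint
  refine ⟨T, hT, fun y => ?_⟩
  have hTSTy : T (S (T y)) = y := DFunLike.congr_fun hTST y
  have : ((‖V (T y)‖ ^ 2 : ℝ) : ℂ) = ((‖y‖ ^ 2 : ℝ) : ℂ) := by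
    rw [← hS_inner, ← adjoint_inner_left, hT.adjoint_eq, hTSTy, inner_self_eq_norm_sq_to_K]
    norm_cast
  exact (sq_eq_sq₀ (norm_nonneg _) (norm_nonneg _)).1 (by exact_mod_cast this)

theorem IsParsevalFrame.exists_isParsevalFrame_clm_comp {e k : ι → E} {M : ℝ}
    (he : IsParsevalFrame e) (hek : IsBesselSeq (e - k) M) (hM : M < 1) :
    ∃ T : E →L[ℂ] E, IsParsevalFrame (T ∘ k) := by
  have hk := he.isBesselSeq.of_sub hek
  have hM' : 0 < 1 - √M := sub_pos.2 ((Real.sqrt_lt' one_pos).2 (by simpa using hM))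
  obtain ⟨T, hT, hTk⟩ := exists_isSelfAdjoint_forall_norm_comp_eq hk.analysisOp hM'
    (he.mul_norm_le_norm_analysisOp_apply hek hk)
  refine ⟨T, fun y => ?_⟩
  have hy (i : ι) : ⟪y, T (k i)⟫ = ⟪T y, k i⟫ := by
    rw [← T.adjoint_inner_right, hT.adjoint_eq]
  simpa only [Function.comp_apply, hy, hTk] using hk.hasSum_sq_norm_analysisOp (T y)

theorem HilbertBasis.exists_clm_apply_eq (b : HilbertBasis ι ℂ E) {k : ι → E} {M : ℝ}
    (hbk : IsBesselSeq (⇑b - k) M) (hM : M < 1) : ∃ D : E →L[ℂ] E, ∀ i, D (k i) = b i := by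
  have hb := b.isParsevalFrame.isBesselSeq
  have hk := hb.of_sub hbk
  set W : E →L[ℂ] E := (b.repr.symm : ℓ²(ι, ℂ) →L[ℂ] E) ∘L hk.analysisOp
  have hbW (z : E) (i : ι) : ⟪b i, W z⟫ = ⟪k i, z⟫ := by
    rw [← b.repr_apply_apply]; simp [W]
  have hW : ‖1 - W‖ < 1 := by
    refine lt_of_le_of_lt (opNorm_le_bound _ (Real.sqrt_nonneg M) fun y => ?_)
      ((Real.sqrt_lt' one_pos).2 (by simpa using hM))
    have hrepr : hb.analysisOp y = b.repr y :=
      lp.ext <| funext fun i => (b.repr_apply_apply y i).symm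
    calc ‖(1 - W) y‖ = ‖hbk.analysisOp y‖ := by
          rw [hb.analysisOp_sub_apply hk hbk, hrepr, ← b.repr.norm_map]
          simp [W]
      _ ≤ √M * ‖y‖ := hbk.norm_analysisOp_apply_le y
  obtain ⟨u, hu⟩ := (isUnit_one_sub_of_norm_lt_one hW).star
  have hub (i : ι) : (u : E →L[ℂ] E) (b i) = k i := ext_inner_right ℂ fun z => by
    rw [hu, sub_sub_cancel, star_eq_adjoint, adjoint_inner_left, hbW]
  refine ⟨↑u⁻¹, fun i => ?_⟩
  rw [← hub]
  exact DFunLike.congr_fun u.inv_mul (b i)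

end Perturbation

end Frames

theorem stmt10_general {H : Type*} [NormedAddCommGroup H] [InnerProductSpace ℂ H]
    [CompleteSpace H] (fseq gseq : ℕ → H) (B : H →L[ℂ] H)
    (hB : ∀ f : H, HasSum (fun n => ‖⟪f, B (fseq n)⟫‖ ^ 2) (‖f‖ ^ 2))
    (𝓑 : ℝ) (h𝓑 : 𝓑 < 1 / ‖B‖ ^ 2)
    (hBessel : ∀ f : H, Summable (fun n => ‖⟪f, fseq n - gseq n⟫‖ ^ 2) ∧
      ∑' n, ‖⟪f, fseq n - gseq n⟫‖ ^ 2 ≤ 𝓑 * ‖f‖ ^ 2) :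
    (∃ C : H →L[ℂ] H, ∀ f : H, HasSum (fun n => ‖⟪f, C (gseq n)⟫‖ ^ 2) (‖f‖ ^ 2)) ∧
    ((Orthonormal ℂ (fun n => B (fseq n)) ∧
        (Submodule.span ℂ (Set.range fun n => B (fseq n))).topologicalClosure = ⊤) →
      ∃ C : H →L[ℂ] H, Orthonormal ℂ (fun n => C (gseq n)) ∧
        (Submodule.span ℂ (Set.range fun n => C (gseq n))).topologicalClosure = ⊤) := by
  have hd : IsBesselSeq (B ∘ fseq - B ∘ gseq) (max 𝓑 0 * ‖B‖ ^ 2) := by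
    have hcomp : B ∘ (fseq - gseq) = B ∘ fseq - B ∘ gseq := funext fun n => map_sub B _ _
    exact hcomp ▸ (IsBesselSeq.mono (h := fseq - gseq) hBessel (le_max_left 𝓑 0)).clm_comp
      (le_max_right 𝓑 0) B
  have hM : max 𝓑 0 * ‖B‖ ^ 2 < 1 := by
    rcases le_or_gt 𝓑 0 with h | h
    · simp [max_eq_right h]
    · rw [max_eq_left h.le, ← lt_div_iff₀ (one_div_pos.1 (h.trans h𝓑))]
      simpa using h𝓑
  refine ⟨?_, fun ⟨hon, hsp⟩ => ?_⟩
  · obtain ⟨T, hT⟩ := IsParsevalFrame.exists_isParsevalFrame_clm_comp hB hd hM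
    exact ⟨T ∘L B, hT⟩
  · set b := HilbertBasis.mk hon hsp.ge
    have hb : ⇑b = B ∘ fseq := HilbertBasis.coe_mk _ _
    obtain ⟨D, hD⟩ := b.exists_clm_apply_eq (k := B ∘ gseq) (hb ▸ hd) hM
    have hDB : (fun n => (D ∘L B) (gseq n)) = fun n => B (fseq n) :=
      funext fun n => (hD n).trans (congrFun hb n)
    exact ⟨D ∘L B, hDB ▸ hon, hDB ▸ hsp⟩

/-- Paley–Wiener type result: if `{B f_n}` is a Parseval frame with `B ≠ 0`
bounded, and `{f_n - g_n}` is a Bessel sequence with bound `𝓑 < 1/‖B‖²`, then `{g_n}` is a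
CFC sequence; if moreover `{B f_n}` is an orthonormal basis, then `{g_n}` is a CO sequence. -/
theorem stmt10 {H : Type*} [NormedAddCommGroup H] [InnerProductSpace ℂ H]
    [CompleteSpace H] [TopologicalSpace.SeparableSpace H]
    (hH : ¬ FiniteDimensional ℂ H) (fseq gseq : ℕ → H)
    (B : H →L[ℂ] H) (hB0 : B ≠ 0)
    (hB : ∀ f : H, HasSum (fun n => ‖⟪f, B (fseq n)⟫‖ ^ 2) (‖f‖ ^ 2))
    (𝓑 : ℝ) (h𝓑 : 𝓑 < 1 / ‖B‖ ^ 2)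
    (hBessel : ∀ f : H, Summable (fun n => ‖⟪f, fseq n - gseq n⟫‖ ^ 2) ∧
      ∑' n, ‖⟪f, fseq n - gseq n⟫‖ ^ 2 ≤ 𝓑 * ‖f‖ ^ 2) :
    (∃ C : H →L[ℂ] H, ∀ f : H, HasSum (fun n => ‖⟪f, C (gseq n)⟫‖ ^ 2) (‖f‖ ^ 2)) ∧
    ((Orthonormal ℂ (fun n => B (fseq n)) ∧
        (Submodule.span ℂ (Set.range fun n => B (fseq n))).topologicalClosure = ⊤) →
      ∃ C : H →L[ℂ] H, Orthonormal ℂ (fun n => C (gseq n)) ∧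
        (Submodule.span ℂ (Set.range fun n => C (gseq n))).topologicalClosure = ⊤) :=
  stmt10_general fseq gseq B hB 𝓑 h𝓑 hBessel
end
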